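/- Let α ∈ (1/2, 1), φ ∈ (0, 1), p ∈ (0, 1), and let k ≥ 2 be an integer. Then [αφp + (1 − (1−α)ᵏ)(1−φ)p] / [αφp + (1−α)φ(1−p) + (1 − (1−α)ᵏ)(1−φ)p + (1 − αᵏ)(1−φ)(1−p)] < (α·p) / (α·p + (1−α)·(1−p)). -/
import Mathlib

lemma aux_pow (α : ℝ) (h1 : 1/2 < α) (h2 : α < 1) :
    ∀ n : ℕ, 3 ≤ n → α^n - (1-α)^n < α - (1-α) := by
  intro n hn
  induction n with
  | zero => omega
  | succ m ih =>
    rcases Nat.lt_or_ge m 3 with hm | hm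
    · interval_cases m
      · omega
      · omega
      · -- n = 3
        have hβ : 0 < 1 - α := by linarith
        have hq : α^(2+1) - (1-α)^(2+1) = (2*α-1)*(1 - α*(1-α)) := by ring
        nlinarith [hq, mul_pos (mul_pos (show (0:ℝ)<2*α-1 by linarith) (show (0:ℝ)<α by linarith)) hβ]
    · have ih' := ih hm
      have hβ0 : 0 < 1 - α := by linarith
      have hβn : (1-α)^m < 1 - α := by
        calc (1-α)^m ≤ (1-α)^2 := by
              apply pow_le_pow_of_le_one (le_of_lt hβ0) (by linarith) (by omega)
          _ < 1 - α := by nlinarith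
      have hαn : α^m ≤ 1 := pow_le_one₀ (by linarith) (le_of_lt h2)
      have hα0 : 0 < α := by linarith
      have key : α^(m+1) - (1-α)^(m+1) = α*(α^m - (1-α)^m) + (1-α)^m*(α - (1-α)) := by
        ring
      nlinarith [mul_lt_mul_of_pos_left ih' hα0,
        mul_lt_mul_of_pos_right hβn (show (0:ℝ) < α - (1-α) by linarith)]

theorem stmt_7 (α φ p : ℝ) (k : ℕ) (hα : 1/2 < α ∧ α < 1) (hφ : 0 < φ ∧ φ < 1)
    (hp : 0 < p ∧ p < 1) (hk : 2 ≤ k) :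
    (α * φ * p + (1 - (1 - α)^k) * (1 - φ) * p) /
      (α * φ * p + (1 - α) * φ * (1 - p) + (1 - (1 - α)^k) * (1 - φ) * p +
        (1 - α^k) * (1 - φ) * (1 - p)) <
    (α * p) / (α * p + (1 - α) * (1 - p)) := by
  obtain ⟨hα1, hα2⟩ := hα
  obtain ⟨hφ1, hφ2⟩ := hφ
  obtain ⟨hp1, hp2⟩ := hp
  have hβ0 : 0 < 1 - α := by linarith
  have hα0 : 0 < α := by linarith
  have key : α^(k+1) - (1-α)^(k+1) < α - (1-α) :=
    aux_pow α hα1 hα2 (k+1) (by omega)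
  have hαk : α^k < 1 := pow_lt_one₀ (le_of_lt hα0) hα2 (by omega)
  have hβk : (1-α)^k < 1 := pow_lt_one₀ (le_of_lt hβ0) (by linarith) (by omega)
  have hβkpos : 0 < (1-α)^k := pow_pos hβ0 k
  have hαkpos : 0 < α^k := pow_pos hα0 k
  have hD2 : 0 < α * p + (1 - α) * (1 - p) := by nlinarith
  have hD1 : 0 < α * φ * p + (1 - α) * φ * (1 - p) + (1 - (1 - α)^k) * (1 - φ) * p +
        (1 - α^k) * (1 - φ) * (1 - p) := by
    nlinarith [mul_pos (mul_pos hα0 hφ1) hp1,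
      mul_pos (mul_pos hβ0 hφ1) (show (0:ℝ)<1-p by linarith),
      mul_pos (mul_pos (show (0:ℝ)<1-(1-α)^k by linarith) (show (0:ℝ)<1-φ by linarith)) hp1,
      mul_pos (mul_pos (show (0:ℝ)<1-α^k by linarith) (show (0:ℝ)<1-φ by linarith)) (show (0:ℝ)<1-p by linarith)]
  rw [div_lt_div_iff₀ hD1 hD2]
  -- key rewritten: (1-α)*(1-(1-α)^k) < α*(1-α^k)
  have key2 : (1-α)*(1-(1-α)^k) < α*(1-α^k) := by
    have e1 : α^(k+1) = α * α^k := by ring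
    have e2 : (1-α)^(k+1) = (1-α) * (1-α)^k := by ring
    nlinarith [key]
  nlinarith [mul_pos (mul_pos hp1 (show (0:ℝ) < 1-p by linarith)) (show (0:ℝ) < 1-φ by linarith), key2,
    mul_lt_mul_of_pos_left key2 (mul_pos (mul_pos hp1 (show (0:ℝ) < 1-p by linarith)) (show (0:ℝ) < 1-φ by linarith))]
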